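/- arXiv:1306.3611 — 2 statements merged into one kernel-verified Lean document; each statement's English description precedes it below -/
import Mathlib

section
/- Let M₀ ~ M₁ ~ ... ~ M_d be a geodesic in 𝒫_m (a path of length d(M₀,M_d) between M₀ and M_d). Then every matching M_i on the geodesic contains every edge common to M₀ and M_d. -/
open SimpleGraph

/-- A simple graph on `Fin n` is a perfect matching if every vertex is
incident with exactly one edge, i.e. has a unique neighbor. -/
def IsPerfMatching {n : ℕ} (M : SimpleGraph (Fin n)) : Prop :=
  ∀ v, ∃! w, M.Adj v w

/-- A simple graph is (i.e. its edges form) a single cycle of length `n`: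
there is a cycle of length `n` passing through all of its edges. -/
def IsCycleGraphOfLength {V : Type*} (G : SimpleGraph V) (n : ℕ) : Prop :=
  ∃ (v : V) (p : G.Walk v v), p.IsCycle ∧ p.length = n ∧ ∀ e ∈ G.edgeSet, e ∈ p.edges

/-- Two perfect matchings are adjacent in the matching graph `𝒫ₘ` iff they are
distinct and their symmetric difference is a cycle of length four. -/
def MatchAdj {n : ℕ} (M₁ M₂ : SimpleGraph (Fin n)) : Prop :=
  M₁ ≠ M₂ ∧ IsCycleGraphOfLength (symmDiff M₁ M₂) 4

/-- Vertices of the graph `𝒫ₘ`: all perfect matchings of `K_{2m}`. -/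
abbrev PMVertex (m : ℕ) := {M : SimpleGraph (Fin (2 * m)) // IsPerfMatching M}

/-- The graph `𝒫ₘ` of perfect matchings of `K_{2m}`. -/
def matchingGraph (m : ℕ) : SimpleGraph (PMVertex m) where
  Adj M₁ M₂ := MatchAdj M₁.1 M₂.1
  symm := by
    constructor
    rintro M₁ M₂ ⟨hne, hc⟩
    exact ⟨hne.symm, by rwa [symmDiff_comm]⟩
  loopless := ⟨fun M h => h.1 rfl⟩

/-- The number of geodesics (shortest paths) between two vertices of a graph. -/
noncomputable def geodesicCount {V : Type*} (G : SimpleGraph V) (u v : V) : ℕ :=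
  Nat.card {p : G.Walk u v // p.IsPath ∧ p.length = G.dist u v}

/-!
Identify a perfect matching with its partner map, a fixed-point-free involution `σ`. Two
matchings are adjacent in `𝒫ₘ` exactly when one is the conjugate of the other by a transposition
`(c d)` with `d ≠ σ c`: the edges `c σc, d σd` are replaced by `c σd, d σc`.

For an edge `ab`, conjugating `σ` by `(b σa)` forces `ab` into the matching (trading `a σa, b σb`
for `ab, σa σb`) and fixes the matchings that already contain `ab`. This map sends adjacent
matchings to equal or adjacent ones. If `a` (or `b`) lies outside the four vertices moved by the
step, forcing commutes with the step. Otherwise both images are the unique matching that pairs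
`a` with `b` and agrees with the two matchings off those four vertices, so they coincide; this
always happens at a step that drops `ab`. Hence if a geodesic between two matchings containing `ab`
passes through a matching without `ab`, its image is a strictly shorter walk between the same
endpoints.
-/

open Equiv Function

namespace Equiv.Perm

variable {V : Type*}

structure IsFixedPointFreeInvolution (σ : Perm V) : Prop where
  involutive : Involutive σ
  apply_ne : ∀ v, σ v ≠ v

def IsSwitch [DecidableEq V] (σ τ : Perm V) : Prop :=
  ∃ c d, c ≠ d ∧ σ c ≠ d ∧ τ = swap c d * σ * swap c d

def forceEdge [DecidableEq V] (a b : V) (σ : Perm V) : Perm V :=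
  swap b (σ a) * σ * swap b (σ a)

theorem eq_of_involutive_of_apply_eq {φ ψ : Perm V} (hφ : Involutive φ) (hψ : Involutive ψ)
    {a b c d : V} (ha : φ a = b) (ha' : ψ a = b) (hc : φ c = d) (hc' : ψ c = d)
    (h : ∀ u, u ≠ a → u ≠ b → u ≠ c → u ≠ d → φ u = ψ u) : φ = ψ := by
  ext u
  by_cases hua : u = a
  · rw [hua, ha, ha']
  by_cases hub : u = b
  · rw [hub, ← ha, hφ, ha, ← ha', hψ]
  by_cases huc : u = c
  · rw [huc, hc, hc']
  by_cases hud : u = d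
  · rw [hud, ← hc, hφ, hc, ← hc', hψ]
  exact h u hua hub huc hud

namespace IsFixedPointFreeInvolution

variable {σ : Perm V} (hσ : σ.IsFixedPointFreeInvolution)
include hσ

theorem apply_apply (v : V) : σ (σ v) = v := hσ.involutive v

theorem apply_eq_comm {u v : V} : σ u = v ↔ σ v = u := by
  rw [hσ.involutive.eq_iff, eq_comm]

theorem ne_apply_of_apply_ne {u v : V} (h : σ u ≠ v) : u ≠ σ v :=
  fun e => h (by rw [e, hσ.apply_apply])

theorem conj_swap [DecidableEq V] (c d : V) :
    (swap c d * σ * swap c d).IsFixedPointFreeInvolution where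
  involutive u := by simp [hσ.apply_apply]
  apply_ne u h := hσ.apply_ne (swap c d u) (by simpa using congrArg (swap c d) h)

theorem conj_swap_apply_of_ne [DecidableEq V] {c d u : V} (hc : u ≠ c) (hd : u ≠ d)
    (hσc : u ≠ σ c) (hσd : u ≠ σ d) : (swap c d * σ * swap c d) u = σ u := by
  have hc' : σ u ≠ c := fun h => hσc (by rw [← h, hσ.apply_apply])
  have hd' : σ u ≠ d := fun h => hσd (by rw [← h, hσ.apply_apply])
  simp [swap_apply_of_ne_of_ne hc hd, swap_apply_of_ne_of_ne hc' hd']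

end IsFixedPointFreeInvolution

section DecidableEq

variable [DecidableEq V] {σ τ : Perm V} {a b : V}

theorem IsSwitch.symm (hσ : σ.IsFixedPointFreeInvolution) (h : IsSwitch σ τ) : IsSwitch τ σ := by
  obtain ⟨c, d, hcd, hσcd, rfl⟩ := h
  refine ⟨c, d, hcd, fun h => hσcd (hσ.apply_eq_comm.2 ?_), by simp [mul_assoc]⟩
  simpa [swap_apply_eq_iff] using h

theorem isSwitch_of_alternating (hσ : σ.IsFixedPointFreeInvolution)
    (hτ : τ.IsFixedPointFreeInvolution) {v₁ v₂ v₃ v₄ : V} (h₂₄ : v₂ ≠ v₄)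
    (h₁ : σ v₁ = v₂) (h₂ : τ v₂ = v₃) (h₃ : σ v₃ = v₄) (h₄ : τ v₄ = v₁)
    (hoff : ∀ u, u ≠ v₁ → u ≠ v₂ → u ≠ v₃ → u ≠ v₄ → σ u = τ u) : IsSwitch σ τ := by
  have h₁₂ : v₁ ≠ v₂ := fun h => hσ.apply_ne v₁ (h₁.trans h.symm)
  have h₂₃ : v₂ ≠ v₃ := fun h => hτ.apply_ne v₂ (h₂.trans h.symm)
  have h₃₄ : v₃ ≠ v₄ := fun h => hσ.apply_ne v₃ (h₃.trans h.symm)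
  have h₄₁ : v₄ ≠ v₁ := fun h => hτ.apply_ne v₄ (h₄.trans h.symm)
  have h₁' : σ v₂ = v₁ := hσ.apply_eq_comm.1 h₁
  have h₃' : σ v₄ = v₃ := hσ.apply_eq_comm.1 h₃
  refine ⟨v₂, v₄, h₂₄, h₁' ▸ h₄₁.symm, ?_⟩
  refine eq_of_involutive_of_apply_eq hτ.involutive (hσ.conj_swap v₂ v₄).involutive h₂ ?_ h₄ ?_ ?_
  · simp [h₃', swap_apply_of_ne_of_ne h₂₃.symm h₃₄]
  · simp [h₁', swap_apply_of_ne_of_ne h₁₂ h₄₁.symm]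
  · intro u hu₂ hu₃ hu₄ hu₁
    rw [hσ.conj_swap_apply_of_ne hu₂ hu₄ (h₁' ▸ hu₁) (h₃' ▸ hu₃), hoff u hu₁ hu₂ hu₃ hu₄]

theorem forceEdge_of_apply_eq (h : σ a = b) : forceEdge a b σ = σ := by
  ext; simp [forceEdge, h]

theorem IsFixedPointFreeInvolution.forceEdge (hσ : σ.IsFixedPointFreeInvolution) :
    (forceEdge a b σ).IsFixedPointFreeInvolution :=
  hσ.conj_swap _ _

theorem forceEdge_apply_left (hσ : σ.IsFixedPointFreeInvolution)
    (hab : a ≠ b) : forceEdge a b σ a = b := by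
  simp [forceEdge, swap_apply_of_ne_of_ne hab (hσ.apply_ne a).symm]

theorem forceEdge_apply_of_ne (hσ : σ.IsFixedPointFreeInvolution)
    {u : V} (ha : u ≠ a) (hb : u ≠ b) (hσa : u ≠ σ a) (hσb : u ≠ σ b) :
    forceEdge a b σ u = σ u :=
  hσ.conj_swap_apply_of_ne hb hσa hσb (by rwa [hσ.apply_apply])

theorem forceEdge_comm (hσ : σ.IsFixedPointFreeInvolution)
    (hab : a ≠ b) : forceEdge a b σ = forceEdge b a σ := by
  by_cases h : σ a = b
  · rw [forceEdge_of_apply_eq h, forceEdge_of_apply_eq (hσ.apply_eq_comm.1 h)]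
  have hba : forceEdge b a σ a = b := by
    rw [← hσ.forceEdge.apply_eq_comm]; exact forceEdge_apply_left hσ hab.symm
  have hσab : σ a ≠ σ b := σ.injective.ne hab
  refine eq_of_involutive_of_apply_eq hσ.forceEdge.involutive hσ.forceEdge.involutive
    (forceEdge_apply_left hσ hab) hba (c := σ a) (d := σ b) ?_ ?_ ?_
  · simp [forceEdge, swap_apply_of_ne_of_ne (hσ.apply_ne b) hσab.symm]
  · simp [forceEdge, hσ.apply_apply, swap_apply_of_ne_of_ne (hσ.apply_ne a) hσab]
  · intro u h₁ h₂ h₃ h₄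
    rw [forceEdge_apply_of_ne hσ h₁ h₂ h₃ h₄, forceEdge_apply_of_ne hσ h₂ h₁ h₄ h₃]

theorem isSwitch_forceEdge_of_notMem (hσ : σ.IsFixedPointFreeInvolution) {c d : V}
    (hcd : c ≠ d) (hσcd : σ c ≠ d) (ha : a ∉ ({c, d, σ c, σ d} : Finset V)) :
    IsSwitch (forceEdge a b σ) (forceEdge a b (swap c d * σ * swap c d)) := by
  simp only [Finset.mem_insert, Finset.mem_singleton, not_or] at ha
  have hτa : (swap c d * σ * swap c d) a = σ a :=
    hσ.conj_swap_apply_of_ne ha.1 ha.2.1 ha.2.2.1 ha.2.2.2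
  refine ⟨swap b (σ a) c, swap b (σ a) d, (swap b (σ a)).injective.ne hcd, ?_, ?_⟩
  · simpa [forceEdge] using (swap b (σ a)).injective.ne hσcd
  · rw [forceEdge, forceEdge, hτa, swap_apply_apply, swap_inv]
    simp only [mul_assoc, swap_mul_self_mul]

theorem conj_swap_mem {S : Finset V} (hS : ∀ u ∈ S, σ u ∈ S) {c d : V} (hc : c ∈ S) (hd : d ∈ S) :
    ∀ u ∈ S, (swap c d * σ * swap c d) u ∈ S := by
  have hswap : ∀ u ∈ S, swap c d u ∈ S := by
    intro u hu
    rw [swap_apply_def]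
    split_ifs <;> assumption
  exact fun u hu => hswap _ (hS _ (hswap u hu))

theorem apply_eq_of_sdiff_eq_pair {φ : Perm V} (hφ : φ.IsFixedPointFreeInvolution) {S : Finset V}
    (hS : ∀ u ∈ S, φ u ∈ S) (hab : φ a = b) {c d : V} (hcd : S \ {a, b} = {c, d}) : φ c = d := by
  have hc : c ∈ S \ {a, b} := by simp [hcd]
  simp only [Finset.mem_sdiff, Finset.mem_insert, Finset.mem_singleton, not_or] at hc
  obtain ⟨hcS, hca, hcb⟩ := hc
  have hφc : φ c ∈ S \ {a, b} := by
    simp only [Finset.mem_sdiff, Finset.mem_insert, Finset.mem_singleton, not_or]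
    exact ⟨hS c hcS, fun h => hcb (by rw [← hab, ← h, hφ.apply_apply]),
      fun h => hca (φ.injective (h.trans hab.symm))⟩
  simpa [hcd, hφ.apply_ne c] using hφc

theorem forceEdge_eq_of_eqOn_compl (hσ : σ.IsFixedPointFreeInvolution)
    (hτ : τ.IsFixedPointFreeInvolution) {S : Finset V} (hS : S.card = 4)
    (hσS : ∀ u ∈ S, σ u ∈ S) (hτS : ∀ u ∈ S, τ u ∈ S) (hστ : ∀ u ∉ S, σ u = τ u)
    (ha : a ∈ S) (hb : b ∈ S) (hab : a ≠ b) : forceEdge a b σ = forceEdge a b τ := by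
  obtain ⟨c, d, -, hcd⟩ : ∃ c d, c ≠ d ∧ S \ {a, b} = {c, d} := by
    rw [← Finset.card_eq_two,
      Finset.card_sdiff_of_subset (by simp [Finset.insert_subset_iff, ha, hb]), hS,
      Finset.card_pair hab]
  have hforce : ∀ {ρ : Perm V}, ρ.IsFixedPointFreeInvolution → (∀ u ∈ S, ρ u ∈ S) →
      forceEdge a b ρ c = d := fun hρ hρS =>
    apply_eq_of_sdiff_eq_pair hρ.forceEdge (conj_swap_mem hρS hb (hρS a ha))
      (forceEdge_apply_left hρ hab) hcd
  refine eq_of_involutive_of_apply_eq hσ.forceEdge.involutive hτ.forceEdge.involutive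
    (forceEdge_apply_left hσ hab) (forceEdge_apply_left hτ hab) (hforce hσ hσS) (hforce hτ hτS) ?_
  intro u h₁ h₂ h₃ h₄
  have hu : u ∉ S := by
    intro hu
    have : u ∈ S \ {a, b} := by simp [hu, h₁, h₂]
    simp [hcd, h₃, h₄] at this
  have hne : ∀ {v}, v ∈ S → u ≠ v := fun hv h => hu (h ▸ hv)
  rw [forceEdge_apply_of_ne hσ h₁ h₂ (hne (hσS a ha)) (hne (hσS b hb)),
    forceEdge_apply_of_ne hτ h₁ h₂ (hne (hτS a ha)) (hne (hτS b hb)), hστ u hu]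

theorem card_pairs_eq_four (hσ : σ.IsFixedPointFreeInvolution) {c d : V} (hcd : c ≠ d)
    (hσcd : σ c ≠ d) : ({c, d, σ c, σ d} : Finset V).card = 4 := by
  rw [Finset.card_insert_of_notMem
      (by simp [hcd, hσ.ne_apply_of_apply_ne hσcd, (hσ.apply_ne c).symm]),
    Finset.card_insert_of_notMem (by simp [hσcd.symm, (hσ.apply_ne d).symm]),
    Finset.card_pair (σ.injective.ne hcd)]

theorem apply_mem_pairs (hσ : σ.IsFixedPointFreeInvolution) {c d u : V}
    (hu : u ∈ ({c, d, σ c, σ d} : Finset V)) : σ u ∈ ({c, d, σ c, σ d} : Finset V) := by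
  simp only [Finset.mem_insert, Finset.mem_singleton] at hu
  rcases hu with rfl | rfl | rfl | rfl <;> simp [hσ.apply_apply]

theorem forceEdge_eq_or_isSwitch (hσ : σ.IsFixedPointFreeInvolution) (hab : a ≠ b)
    (h : IsSwitch σ τ) :
    forceEdge a b σ = forceEdge a b τ ∨
      IsSwitch (forceEdge a b σ) (forceEdge a b τ) ∧ (σ a = b ↔ τ a = b) := by
  obtain ⟨c, d, hcd, hσcd, rfl⟩ := h
  have hτ := hσ.conj_swap c d
  set S : Finset V := {c, d, σ c, σ d}
  have hoff : ∀ u ∉ S, σ u = (swap c d * σ * swap c d) u := by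
    intro u hu
    simp only [S, Finset.mem_insert, Finset.mem_singleton, not_or] at hu
    exact (hσ.conj_swap_apply_of_ne hu.1 hu.2.1 hu.2.2.1 hu.2.2.2).symm
  by_cases haS : a ∈ S
  · by_cases hbS : b ∈ S
    · have hσS : ∀ u ∈ S, σ u ∈ S := fun u => apply_mem_pairs hσ
      exact Or.inl <| forceEdge_eq_of_eqOn_compl hσ hτ (card_pairs_eq_four hσ hcd hσcd) hσS
        (conj_swap_mem hσS (by simp [S]) (by simp [S])) hoff haS hbS hab
    · rw [forceEdge_comm hσ hab, forceEdge_comm hτ hab, hσ.apply_eq_comm, hτ.apply_eq_comm,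
        ← hoff b hbS]
      exact Or.inr ⟨isSwitch_forceEdge_of_notMem hσ hcd hσcd hbS, Iff.rfl⟩
  · rw [← hoff a haS]
    exact Or.inr ⟨isSwitch_forceEdge_of_notMem hσ hcd hσcd haS, Iff.rfl⟩

end DecidableEq

section Matching

variable {V : Type*} {σ τ : Perm V}

def toMatching (σ : Perm V) : SimpleGraph V := SimpleGraph.fromRel fun u v => σ u = v

theorem toMatching_adj (hσ : σ.IsFixedPointFreeInvolution) {u v : V} :
    σ.toMatching.Adj u v ↔ σ u = v := by
  rw [toMatching, fromRel_adj, hσ.apply_eq_comm (u := v), or_self]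
  exact and_iff_right_of_imp fun h => h ▸ (hσ.apply_ne u).symm

theorem symmDiff_toMatching_adj (hσ : σ.IsFixedPointFreeInvolution)
    (hτ : τ.IsFixedPointFreeInvolution) {u v : V} :
    (symmDiff σ.toMatching τ.toMatching).Adj u v ↔ σ u = v ∧ τ u ≠ v ∨ τ u = v ∧ σ u ≠ v := by
  simp [symmDiff_def, toMatching_adj hσ, toMatching_adj hτ]

theorem IsFixedPointFreeInvolution.isPerfMatching {n : ℕ} {σ : Perm (Fin n)}
    (hσ : σ.IsFixedPointFreeInvolution) : IsPerfMatching σ.toMatching :=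
  fun v => ⟨σ v, (toMatching_adj hσ).2 rfl, fun _ h => ((toMatching_adj hσ).1 h).symm⟩

end Matching

end Equiv.Perm

namespace IsPerfMatching

variable {n : ℕ} {M : SimpleGraph (Fin n)} (hM : IsPerfMatching M)

noncomputable def partner : Perm (Fin n) :=
  Involutive.toPerm (fun v => (hM v).choose) fun v =>
    (hM _).unique (hM _).choose_spec.1 (hM v).choose_spec.1.symm

theorem adj_iff_partner {u v : Fin n} : M.Adj u v ↔ hM.partner u = v :=
  ⟨fun h => ((hM u).choose_spec.2 v h).symm, fun h => h ▸ (hM u).choose_spec.1⟩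

theorem partner_isFixedPointFreeInvolution : hM.partner.IsFixedPointFreeInvolution where
  involutive := Involutive.toPerm_involutive _
  apply_ne _ h := M.irrefl ((hM.adj_iff_partner).2 h)

theorem toMatching_partner : hM.partner.toMatching = M := by
  ext u v
  rw [Perm.toMatching_adj hM.partner_isFixedPointFreeInvolution, hM.adj_iff_partner]

end IsPerfMatching

section FourCycle

variable {V : Type*} {G : SimpleGraph V}

theorem IsCycleGraphOfLength.exists_four (h : IsCycleGraphOfLength G 4) :
    ∃ v₁ v₂ v₃ v₄, v₁ ≠ v₂ ∧ v₁ ≠ v₃ ∧ v₁ ≠ v₄ ∧ v₂ ≠ v₃ ∧ v₂ ≠ v₄ ∧ v₃ ≠ v₄ ∧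
      G.Adj v₁ v₂ ∧ G.Adj v₂ v₃ ∧ G.Adj v₃ v₄ ∧ G.Adj v₄ v₁ ∧
      ∀ ⦃u w⦄, G.Adj u w → u = v₁ ∨ u = v₂ ∨ u = v₃ ∨ u = v₄ := by
  obtain ⟨v, p, hp, hlen, hcover⟩ := h
  rcases p with _ | ⟨h₁, _ | ⟨h₂, _ | ⟨h₃, _ | ⟨h₄, _ | ⟨h₅, p⟩⟩⟩⟩⟩ <;> simp at hlen
  have hnodup := hp.support_nodup
  simp only [Walk.support_cons, Walk.support_nil, List.tail_cons, List.nodup_cons, List.mem_cons,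
    List.not_mem_nil, not_or] at hnodup
  refine ⟨_, _, _, _, h₁.ne, ?_, ?_, h₂.ne, ?_, h₃.ne, h₁, h₂, h₃, h₄, fun u w huw => ?_⟩
  · tauto
  · tauto
  · tauto
  · have := hcover s(u, w) huw
    simp only [Walk.edges_cons, Walk.edges_nil, List.mem_cons, Sym2.eq_iff,
      List.not_mem_nil] at this
    tauto

theorem isCycleGraphOfLength_four {v₁ v₂ v₃ v₄ : V} (h₁₂ : v₁ ≠ v₂) (h₁₃ : v₁ ≠ v₃) (h₁₄ : v₁ ≠ v₄)
    (h₂₃ : v₂ ≠ v₃) (h₂₄ : v₂ ≠ v₄) (h₃₄ : v₃ ≠ v₄) (a₁ : G.Adj v₁ v₂) (a₂ : G.Adj v₂ v₃)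
    (a₃ : G.Adj v₃ v₄) (a₄ : G.Adj v₄ v₁)
    (hcover : ∀ ⦃u w⦄, G.Adj u w →
      s(u, w) = s(v₁, v₂) ∨ s(u, w) = s(v₂, v₃) ∨ s(u, w) = s(v₃, v₄) ∨ s(u, w) = s(v₄, v₁)) :
    IsCycleGraphOfLength G 4 := by
  refine ⟨v₁, .cons a₁ (.cons a₂ (.cons a₃ (.cons a₄ .nil))), ?_, rfl, fun e he => ?_⟩
  · simp [Walk.cons_isCycle_iff, *, h₁₂.symm, h₁₃.symm, h₁₄.symm]
  · induction e using Sym2.ind with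
    | h u w => simpa using hcover he

end FourCycle

namespace Equiv.Perm

variable {n : ℕ} {σ τ : Perm (Fin n)}

theorem isSwitch_of_matchAdj_toMatching (hσ : σ.IsFixedPointFreeInvolution)
    (hτ : τ.IsFixedPointFreeInvolution) (h : MatchAdj σ.toMatching τ.toMatching) :
    IsSwitch σ τ := by
  obtain ⟨-, hcyc⟩ := h
  obtain ⟨v₁, v₂, v₃, v₄, -, h₁₃, -, -, h₂₄, -, a₁, a₂, a₃, a₄, hcover⟩ := hcyc.exists_four
  simp only [symmDiff_toMatching_adj hσ hτ] at a₁ a₂ a₃ a₄ hcover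
  have hoff : ∀ u, u ≠ v₁ → u ≠ v₂ → u ≠ v₃ → u ≠ v₄ → σ u = τ u := by
    intro u h₁ h₂ h₃ h₄
    by_contra h
    rcases hcover (Or.inl ⟨rfl, Ne.symm h⟩) with h' | h' | h' | h' <;> contradiction
  rcases a₁ with ⟨h₁, -⟩ | ⟨h₁, -⟩
  · have h₂ : τ v₂ = v₃ :=
        (a₂.resolve_left fun h => h₁₃ ((hσ.apply_eq_comm.1 h₁).symm.trans h.1)).1
    have h₃ : σ v₃ = v₄ :=
        (a₃.resolve_right fun h => h₂₄ ((hτ.apply_eq_comm.1 h₂).symm.trans h.1)).1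
    have h₄ : τ v₄ = v₁ :=
        (a₄.resolve_left fun h => h₁₃ (h.1.symm.trans (hσ.apply_eq_comm.1 h₃))).1
    exact isSwitch_of_alternating hσ hτ h₂₄ h₁ h₂ h₃ h₄ hoff
  · have h₂ : σ v₂ = v₃ :=
        (a₂.resolve_right fun h => h₁₃ ((hτ.apply_eq_comm.1 h₁).symm.trans h.1)).1
    have h₃ : τ v₃ = v₄ :=
        (a₃.resolve_left fun h => h₂₄ ((hσ.apply_eq_comm.1 h₂).symm.trans h.1)).1
    have h₄ : σ v₄ = v₁ :=
        (a₄.resolve_right fun h => h₁₃ (h.1.symm.trans (hτ.apply_eq_comm.1 h₃))).1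
    exact (isSwitch_of_alternating hτ hσ h₂₄ h₁ h₂ h₃ h₄ fun u h₁ h₂ h₃ h₄ =>
      (hoff u h₁ h₂ h₃ h₄).symm).symm hτ

theorem IsSwitch.matchAdj_toMatching (hσ : σ.IsFixedPointFreeInvolution) (h : IsSwitch σ τ) :
    MatchAdj σ.toMatching τ.toMatching := by
  obtain ⟨c, d, hcd, hσcd, rfl⟩ := h
  have hτ := hσ.conj_swap c d
  have hcσd : c ≠ σ d := hσ.ne_apply_of_apply_ne hσcd
  have hσcσd : σ c ≠ σ d := σ.injective.ne hcd
  have hσc := hσ.apply_ne c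
  have hσd := hσ.apply_ne d
  have hτc : (swap c d * σ * swap c d) c = σ d := by
    simp [swap_apply_of_ne_of_ne hcσd.symm hσd]
  have hτd : (swap c d * σ * swap c d) d = σ c := by
    simp [swap_apply_of_ne_of_ne hσc hσcd]
  have hτσc : (swap c d * σ * swap c d) (σ c) = d := by
    simp [swap_apply_of_ne_of_ne hσc hσcd, hσ.apply_apply]
  have hτσd : (swap c d * σ * swap c d) (σ d) = c := by
    simp [swap_apply_of_ne_of_ne hcσd.symm hσd, hσ.apply_apply]
  refine ⟨fun h => hσcσd ?_, isCycleGraphOfLength_four (v₁ := c) (v₂ := σ c) (v₃ := d)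
    (v₄ := σ d) hσc.symm hcd hcσd hσcd hσcσd hσd.symm ?_ ?_ ?_ ?_ fun u w huw => ?_⟩
  · rw [← hτc]
    exact ((toMatching_adj hτ).1 (h ▸ (toMatching_adj hσ).2 rfl)).symm
  · exact (symmDiff_toMatching_adj hσ hτ).2 (Or.inl ⟨rfl, hτc ▸ hσcσd.symm⟩)
  · exact (symmDiff_toMatching_adj hσ hτ).2 (Or.inr ⟨hτσc, by rwa [hσ.apply_apply]⟩)
  · exact (symmDiff_toMatching_adj hσ hτ).2 (Or.inl ⟨rfl, hτd ▸ hσcσd⟩)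
  · exact (symmDiff_toMatching_adj hσ hτ).2 (Or.inr ⟨hτσd, by rw [hσ.apply_apply]; exact hcd.symm⟩)
  · rw [symmDiff_toMatching_adj hσ hτ] at huw
    have hu : u = c ∨ u = d ∨ u = σ c ∨ u = σ d := by
      by_contra! hu
      have := hσ.conj_swap_apply_of_ne hu.1 hu.2.1 hu.2.2.1 hu.2.2.2
      rcases huw with ⟨rfl, h⟩ | ⟨rfl, h⟩
      exacts [h this, h this.symm]
    rcases huw with ⟨rfl, -⟩ | ⟨rfl, -⟩ <;> rcases hu with rfl | rfl | rfl | rfl <;>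
      simp [hτc, hτd, hτσc, hτσd, hσ.apply_apply]

theorem matchAdj_toMatching_iff (hσ : σ.IsFixedPointFreeInvolution)
    (hτ : τ.IsFixedPointFreeInvolution) : MatchAdj σ.toMatching τ.toMatching ↔ IsSwitch σ τ :=
  ⟨isSwitch_of_matchAdj_toMatching hσ hτ, fun h => h.matchAdj_toMatching hσ⟩

end Equiv.Perm

open Equiv.Perm

noncomputable def PMVertex.forceEdge {m : ℕ} (a b : Fin (2 * m)) (M : PMVertex m) : PMVertex m :=
  ⟨(Perm.forceEdge a b M.2.partner).toMatching,
    M.2.partner_isFixedPointFreeInvolution.forceEdge.isPerfMatching⟩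

section MatchingGraph

variable {m : ℕ} {M N : PMVertex m} {a b : Fin (2 * m)}

theorem matchingGraph_adj_iff : (matchingGraph m).Adj M N ↔ IsSwitch M.2.partner N.2.partner := by
  rw [← matchAdj_toMatching_iff M.2.partner_isFixedPointFreeInvolution
    N.2.partner_isFixedPointFreeInvolution, M.2.toMatching_partner, N.2.toMatching_partner]
  rfl

theorem PMVertex.forceEdge_eq_self (h : M.1.Adj a b) : PMVertex.forceEdge a b M = M :=
  Subtype.ext <| by
    show (Perm.forceEdge a b M.2.partner).toMatching = M.1
    rw [forceEdge_of_apply_eq (M.2.adj_iff_partner.1 h), M.2.toMatching_partner]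

theorem PMVertex.forceEdge_eq_or_adj (hab : a ≠ b) (h : (matchingGraph m).Adj M N) :
    PMVertex.forceEdge a b M = PMVertex.forceEdge a b N ∨
      (matchingGraph m).Adj (PMVertex.forceEdge a b M) (PMVertex.forceEdge a b N) ∧
        (M.1.Adj a b ↔ N.1.Adj a b) := by
  have hM := M.2.partner_isFixedPointFreeInvolution
  have hN := N.2.partner_isFixedPointFreeInvolution
  rcases forceEdge_eq_or_isSwitch hM hab (matchingGraph_adj_iff.1 h) with heq | ⟨hsw, hiff⟩
  · exact Or.inl (Subtype.ext (congrArg toMatching heq))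
  · refine Or.inr ⟨(matchAdj_toMatching_iff hM.forceEdge hN.forceEdge).2 hsw, ?_⟩
    rw [M.2.adj_iff_partner, N.2.adj_iff_partner, hiff]

end MatchingGraph

namespace SimpleGraph.Walk

variable {V W : Type*} {G : SimpleGraph V} {G' : SimpleGraph W} {f : V → W}

theorem exists_walk_length_le_of_map (hf : ∀ ⦃u v⦄, G.Adj u v → f u = f v ∨ G'.Adj (f u) (f v))
    {u v : V} (p : G.Walk u v) : ∃ q : G'.Walk (f u) (f v), q.length ≤ p.length := by
  induction p with
  | nil => exact ⟨nil, le_rfl⟩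
  | cons h p ih =>
    obtain ⟨q, hq⟩ := ih
    rcases hf h with heq | hadj
    · exact ⟨q.copy heq.symm rfl, by simp; omega⟩
    · exact ⟨cons hadj q, by simp; omega⟩

theorem exists_walk_length_lt_of_map (hf : ∀ ⦃u v⦄, G.Adj u v → f u = f v ∨ G'.Adj (f u) (f v))
    {u v : V} (p : G.Walk u v) {d : G.Dart} (hd : d ∈ p.darts) (hcollapse : f d.fst = f d.snd) :
    ∃ q : G'.Walk (f u) (f v), q.length < p.length := by
  induction p with
  | nil => simp at hd
  | cons h p ih =>
    rw [darts_cons, List.mem_cons] at hd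
    rcases hd with rfl | hd
    · obtain ⟨q, hq⟩ := exists_walk_length_le_of_map hf p
      exact ⟨q.copy hcollapse.symm rfl, by simp; omega⟩
    · obtain ⟨q, hq⟩ := ih hd
      rcases hf h with heq | hadj
      · exact ⟨q.copy heq.symm rfl, by simp; omega⟩
      · exact ⟨cons hadj q, by simp; omega⟩

end SimpleGraph.Walk

/-- Every matching on a geodesic in `𝒫ₘ` contains every edge common to the two
endpoints of the geodesic. -/
theorem stmt8 (m : ℕ) (M₀ Md : PMVertex m) (p : (matchingGraph m).Walk M₀ Md)
    (hgeo : p.length = (matchingGraph m).dist M₀ Md) :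
    ∀ M ∈ p.support, ∀ e ∈ M₀.1.edgeSet, e ∈ Md.1.edgeSet → e ∈ M.1.edgeSet := by
  classical
  intro M hM e he₀ hed
  induction e using Sym2.ind with | h a b => ?_
  rw [mem_edgeSet] at he₀ hed ⊢
  by_contra hM'
  have hab : a ≠ b := he₀.ne
  obtain ⟨d, hd, hd₁, hd₂⟩ := (p.takeUntil M hM).exists_boundary_dart {N | N.1.Adj a b} he₀ hM'
  have hcollapse : PMVertex.forceEdge a b d.fst = PMVertex.forceEdge a b d.snd :=
    (PMVertex.forceEdge_eq_or_adj hab d.adj).resolve_right fun h => hd₂ (h.2.1 hd₁)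
  obtain ⟨q, hq⟩ := p.exists_walk_length_lt_of_map
    (fun _ _ h => (PMVertex.forceEdge_eq_or_adj hab h).imp_right And.left)
    (p.darts_takeUntil_subset_darts hM hd) hcollapse
  have := (matchingGraph m).dist_le
    (q.copy (PMVertex.forceEdge_eq_self he₀) (PMVertex.forceEdge_eq_self hed))
  rw [Walk.length_copy] at this
  omega
end

section
/- Let M' and M'' be two distinct perfect matchings of K_{2m} and let e be an edge of M'' not in M'. Then M'*e is adjacent to M' in 𝒫_m and d(M'*e, M'') = d(M',M'') - 1; equivalently, there is a geodesic from M' to M'' whose first step is the insertion of e. -/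
open SimpleGraph

/-- The unique neighbor of `v` in a (perfect) matching `M`
(junk value `v` itself if `v` has no neighbor). -/
noncomputable def matchOf {V : Type*} (M : SimpleGraph V) (v : V) : V := by
  classical
  exact if h : ∃ w, M.Adj v w then h.choose else v

/-- Insertion `M * e` of an edge `e = {v₁, v₂}` into a perfect matching `M`:
if `e ∈ M` then `M * e = M`; otherwise the edges `{v₁, v₃}` and `{v₂, v₄}` of `M`
incident with `v₁` and `v₂` are deleted and the edges `{v₁, v₂}` and `{v₃, v₄}`
are added. -/
noncomputable def insertEdge {V : Type*} (M : SimpleGraph V) (e : Sym2 V) : SimpleGraph V := by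
  classical
  exact if e ∈ M.edgeSet then M
  else SimpleGraph.fromEdgeSet
    ({f | f ∈ M.edgeSet ∧ ∀ v ∈ e, v ∉ f} ∪ {e, Sym2.map (matchOf M) e})

/-- Iterated insertion `M * (e₁, …, eₙ) = (M * (e₁, …, eₙ₋₁)) * eₙ`. -/
noncomputable def insertEdges {V : Type*} (M : SimpleGraph V) (l : List (Sym2 V)) :
    SimpleGraph V :=
  l.foldl insertEdge M

/-!
The distance in `𝒫ₘ` between `M` and `M'` is `m - c(M ∪ M')`, where `c` counts the connected
components of the union graph. A step of `𝒫ₘ` swaps the two `M`-edges of a 4-cycle for the other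
two, so for a fixed `M''` it changes `c(· ∪ M'')` by at most one. Inserting an edge `e = {v₁, v₂}`
of `M''` missing from `M` is such a step: it relabels `M` by the transposition of `v₂` and the
partner `v₃` of `v₁`. It raises `c` by at least (hence exactly) one, because `e` is a component
of `(M * e) ∪ M''` on its own, and once `v₁` is joined to `v₃` every edge of the resulting graph
lies inside a component of `M ∪ M''`.
-/

namespace SimpleGraph

variable {V : Type*} {G G' : SimpleGraph V} {u v x y : V}

theorem Reachable.elim_sup_edge (h : (G ⊔ edge u v).Reachable x y) :
    G.Reachable x y ∨ G.Reachable x u ∧ G.Reachable v y ∨ G.Reachable x v ∧ G.Reachable u y := by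
  rw [reachable_iff_reflTransGen] at h
  induction h with
  | refl => exact Or.inl .rfl
  | tail _ hadj ih =>
    rcases hadj with hadj | hadj
    · have := hadj.reachable
      grind [Reachable.trans]
    · obtain ⟨⟨rfl, rfl⟩ | ⟨rfl, rfl⟩, -⟩ := (edge_adj ..).1 hadj <;>
        grind [Reachable.trans, Reachable.symm, Reachable.rfl]

theorem reachable_sup_edge (G : SimpleGraph V) (u v : V) : (G ⊔ edge u v).Reachable u v := by
  by_cases huv : u = v
  · exact huv ▸ .rfl
  · exact Adj.reachable (.inr ((edge_adj ..).2 ⟨.inl ⟨rfl, rfl⟩, huv⟩))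

theorem reachable_of_edge_adj (h : G.Reachable u v) (hxy : (edge u v).Adj x y) :
    G.Reachable x y := by
  obtain ⟨⟨rfl, rfl⟩ | ⟨rfl, rfl⟩, -⟩ := (edge_adj ..).1 hxy
  exacts [h, h.symm]

variable [Finite V]

theorem card_connectedComponent_le_of_forall_adj_reachable
    (h : ∀ x y, G'.Adj x y → G.Reachable x y) :
    Nat.card G.ConnectedComponent ≤ Nat.card G'.ConnectedComponent := by
  have hreach : ∀ x y (p : G'.Walk x y), G.Reachable x y := by
    intro x y p
    induction p with
    | nil => rfl
    | cons hadj _ ih => exact (h _ _ hadj).trans ih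
  refine Nat.card_le_card_of_surjective (ConnectedComponent.lift G.connectedComponentMk
    fun x y p _ => ConnectedComponent.sound (hreach x y p)) ?_
  exact ConnectedComponent.ind fun x => ⟨G'.connectedComponentMk x, rfl⟩

theorem card_connectedComponent_le_card_sup_edge_add_one (G : SimpleGraph V) (u v : V) :
    Nat.card G.ConnectedComponent ≤ Nat.card (G ⊔ edge u v).ConnectedComponent + 1 := by
  classical
  let φ := ConnectedComponent.map (Hom.ofLE (le_sup_left : G ≤ G ⊔ edge u v))
  let g : G.ConnectedComponent → Option (G ⊔ edge u v).ConnectedComponent := fun C =>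
    if C = G.connectedComponentMk u then none else some (φ C)
  have hg : Function.Injective g := by
    refine ConnectedComponent.ind₂ fun x y hxy => ?_
    by_cases hx : G.connectedComponentMk x = G.connectedComponentMk u <;>
      by_cases hy : G.connectedComponentMk y = G.connectedComponentMk u <;>
      simp only [g, φ, hx, hy, if_true, if_false, reduceCtorEq, Option.some.injEq,
        ConnectedComponent.map_mk, ConnectedComponent.eq] at hxy
    · exact hx.trans hy.symm
    · rw [ConnectedComponent.eq] at hx hy ⊢
      rcases hxy.elim_sup_edge with hxy | ⟨hxu, -⟩ | ⟨-, huy⟩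
      · exact hxy
      · exact absurd hxu hx
      · exact absurd huy.symm hy
  simpa [Finite.card_option] using Nat.card_le_card_of_injective g hg

theorem card_connectedComponent_sup_edge_lt (h : ¬ G.Reachable u v) :
    Nat.card (G ⊔ edge u v).ConnectedComponent < Nat.card G.ConnectedComponent := by
  have : Fintype G.ConnectedComponent := .ofFinite _
  have : Fintype (G ⊔ edge u v).ConnectedComponent := .ofFinite _
  simp only [Nat.card_eq_fintype_card]
  refine Fintype.card_lt_of_surjective_not_injective _
    (ConnectedComponent.surjective_map_ofLE le_sup_left) fun hinj => h ?_
  rw [← ConnectedComponent.eq]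
  refine hinj ?_
  simp only [ConnectedComponent.map_mk, ConnectedComponent.eq]
  exact reachable_sup_edge G u v

end SimpleGraph

theorem isCycleGraphOfLength_four_s9 {V : Type*} {a b c d : V} (hab : a ≠ b) (hac : a ≠ c)
    (had : a ≠ d) (hbc : b ≠ c) (hbd : b ≠ d) (hcd : c ≠ d) :
    IsCycleGraphOfLength (edge a b ⊔ edge b c ⊔ edge c d ⊔ edge d a) 4 := by
  let G := edge a b ⊔ edge b c ⊔ edge c d ⊔ edge d a
  have h₁ : G.Adj a b := by simp [G, edge_adj, hab]
  have h₂ : G.Adj b c := by simp [G, edge_adj, hbc]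
  have h₃ : G.Adj c d := by simp [G, edge_adj, hcd]
  have h₄ : G.Adj d a := by simp [G, edge_adj, had.symm]
  refine ⟨a, .cons h₁ (.cons h₂ (.cons h₃ (.cons h₄ .nil))), ?_, rfl, ?_⟩
  · simp [Walk.cons_isCycle_iff, Walk.isPath_def, hab, hac, had, hbc, hbd, hcd,
      hab.symm, hac.symm, had.symm]
  · rintro ⟨x, y⟩ hxy
    simp only [mem_edgeSet, sup_adj, edge_adj] at hxy
    simp only [Walk.edges_cons, Walk.edges_nil, List.mem_cons, Sym2.eq_iff]
    grind

/-- `IsPerfMatching` on an arbitrary vertex type. -/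
def IsOneFactor {V : Type*} (M : SimpleGraph V) : Prop := ∀ v, ∃! w, M.Adj v w

namespace IsOneFactor
variable {V : Type*} {M M₁ M₂ : SimpleGraph V}

section
variable (hM : IsOneFactor M)
include hM

theorem adj_matchOf (v : V) : M.Adj v (matchOf M v) := by
  obtain ⟨w, hw, -⟩ := hM v
  have h : ∃ w, M.Adj v w := ⟨w, hw⟩
  simpa [matchOf, h] using h.choose_spec

theorem adj_iff {v w : V} : M.Adj v w ↔ w = matchOf M v :=
  ⟨fun h => (hM v).unique h (hM.adj_matchOf v), fun h => h ▸ hM.adj_matchOf v⟩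

theorem matchOf_matchOf (v : V) : matchOf M (matchOf M v) = v :=
  ((hM.adj_iff).1 (hM.adj_matchOf v).symm).symm

theorem matchOf_ne (v : V) : matchOf M v ≠ v := (hM.adj_matchOf v).ne.symm

theorem comap (e : V ≃ V) : IsOneFactor (M.comap e) := by
  intro v
  obtain ⟨w, hw, huniq⟩ := hM (e v)
  exact ⟨e.symm w, by simpa using hw, fun u hu => e.eq_symm_apply.2 (huniq _ hu)⟩

theorem reachable_iff {x y : V} : M.Reachable x y ↔ y = x ∨ y = matchOf M x := by
  refine ⟨fun h => ?_, by rintro (rfl | rfl) <;> [rfl; exact (hM.adj_matchOf x).reachable]⟩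
  rw [reachable_iff_reflTransGen] at h
  induction h with
  | refl => exact .inl rfl
  | tail _ hadj ih =>
    rw [hM.adj_iff] at hadj
    grind [hM.matchOf_matchOf]

open Finset in
theorem two_mul_card_connectedComponent [Fintype V] :
    2 * Nat.card M.ConnectedComponent = Fintype.card V := by
  classical
  have : Fintype M.ConnectedComponent := .ofFinite _
  have hfiber (C : M.ConnectedComponent) : #{v | M.connectedComponentMk v = C} = 2 := by
    induction C using ConnectedComponent.ind with | h x =>
    have : ({v | M.connectedComponentMk v = M.connectedComponentMk x} : Finset V) =
        {x, matchOf M x} := by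
      ext v
      simp only [mem_filter, mem_univ, true_and, ConnectedComponent.eq, hM.reachable_iff,
        mem_insert, mem_singleton]
      grind [hM.matchOf_matchOf]
    rw [this, card_pair (hM.matchOf_ne x).symm]
  rw [← card_univ (α := V),
    card_eq_sum_card_fiberwise (f := M.connectedComponentMk) (t := univ) fun _ _ => mem_univ _,
    sum_const_nat fun C _ => hfiber C, card_univ, Nat.card_eq_fintype_card, mul_comm]

end

theorem eq_of_le (h₁ : IsOneFactor M₁) (h₂ : IsOneFactor M₂) (h : M₁ ≤ M₂) : M₁ = M₂ := by
  refine le_antisymm h fun x y hxy => ?_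
  rw [(h₂ x).unique hxy (h (h₁.adj_matchOf x))]
  exact h₁.adj_matchOf x

end IsOneFactor

section Insertion

variable {V : Type*} [DecidableEq V] {M : SimpleGraph V} {v₁ v₂ : V}
  (hM : IsOneFactor M) (hA : ¬ M.Adj v₁ v₂) (hne : v₁ ≠ v₂)
include hM hA hne

theorem insertEdge_eq_comap_swap :
    insertEdge M s(v₁, v₂) = M.comap (Equiv.swap v₂ (matchOf M v₁)) := by
  have := hM.matchOf_matchOf
  have := hM.matchOf_ne
  have hs : s(v₁, v₂) ∉ M.edgeSet := hA
  ext x y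
  simp only [insertEdge, hs, if_false, fromEdgeSet_adj, Set.mem_union, Set.mem_ofPred_eq,
    Set.mem_insert_iff, Set.mem_singleton_iff, Sym2.map_mk, mem_edgeSet, Sym2.mem_iff,
    comap_adj, hM.adj_iff]
  grind

theorem isOneFactor_insertEdge : IsOneFactor (insertEdge M s(v₁, v₂)) := by
  rw [insertEdge_eq_comap_swap hM hA hne]
  exact hM.comap _

theorem insertEdge_adj : (insertEdge M s(v₁, v₂)).Adj v₁ v₂ := by
  have := hM.matchOf_ne
  rw [insertEdge_eq_comap_swap hM hA hne, comap_adj, hM.adj_iff]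
  grind

theorem insertEdge_le_sup :
    insertEdge M s(v₁, v₂) ≤ M ⊔ edge v₁ v₂ ⊔ edge (matchOf M v₁) (matchOf M v₂) := by
  have := hM.matchOf_matchOf
  have := hM.matchOf_ne
  have := hM.adj_iff.not.1 hA
  intro x y
  rw [insertEdge_eq_comap_swap hM hA hne]
  simp only [sup_adj, edge_adj, comap_adj, hM.adj_iff]
  grind

theorem isCycleGraphOfLength_symmDiff_insertEdge :
    IsCycleGraphOfLength (symmDiff M (insertEdge M s(v₁, v₂))) 4 := by
  have := hM.matchOf_matchOf
  have := hM.matchOf_ne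
  have := hM.adj_iff.not.1 hA
  have : symmDiff M (insertEdge M s(v₁, v₂)) = edge v₁ v₂ ⊔ edge v₂ (matchOf M v₂) ⊔
      edge (matchOf M v₂) (matchOf M v₁) ⊔ edge (matchOf M v₁) v₁ := by
    ext x y
    rw [insertEdge_eq_comap_swap hM hA hne]
    simp only [symmDiff_def, sup_adj, sdiff_adj, edge_adj, comap_adj, hM.adj_iff]
    grind
  rw [this]
  apply isCycleGraphOfLength_four_s9 <;> grind

end Insertion

theorem matchAdj_insertEdge {n : ℕ} {M : SimpleGraph (Fin n)} {v₁ v₂ : Fin n}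
    (hM : IsOneFactor M) (hA : ¬ M.Adj v₁ v₂) (hne : v₁ ≠ v₂) :
    MatchAdj M (insertEdge M s(v₁, v₂)) :=
  ⟨fun h => hA (h ▸ insertEdge_adj hM hA hne), isCycleGraphOfLength_symmDiff_insertEdge hM hA hne⟩

namespace IsOneFactor

variable {V : Type*} {M M₁ M₂ : SimpleGraph V}

theorem adj_iff_not_adj_of_symmDiff (h₁ : IsOneFactor M₁) (h₂ : IsOneFactor M₂) {x y z : V}
    (hxy : (symmDiff M₁ M₂).Adj x y) (hyz : (symmDiff M₁ M₂).Adj y z) (hxz : x ≠ z) :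
    M₂.Adj x y ↔ ¬ M₂.Adj y z := by
  have := h₁.matchOf_matchOf
  have := h₂.matchOf_matchOf
  simp only [symmDiff_def, sup_adj, sdiff_adj, h₁.adj_iff, h₂.adj_iff] at *
  grind

theorem exists_le_sup_edge_sup_edge (h₁ : IsOneFactor M₁) (h₂ : IsOneFactor M₂)
    (hc : IsCycleGraphOfLength (symmDiff M₁ M₂) 4) :
    ∃ a b c d, M₂.Adj b c ∧ M₂.Adj d a ∧ M₁ ≤ M₂ ⊔ edge a b ⊔ edge c d := by
  obtain ⟨a, p, hp, hlen, hcov⟩ := hc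
  match p, hlen with
  | .cons (v := b) hab (.cons (v := c) hbc (.cons (v := d) hcd (.cons hda .nil))), _ =>
  have hnd := hp.support_nodup
  simp only [Walk.support_cons, Walk.support_nil, List.tail_cons, List.nodup_cons,
    List.mem_cons, List.not_mem_nil] at hnd
  have hac : a ≠ c := by grind
  have hbd : b ≠ d := by grind
  have hcov' : ∀ x y, M₁.Adj x y → M₂.Adj x y ∨ s(x, y) = s(a, b) ∨ s(x, y) = s(b, c) ∨
      s(x, y) = s(c, d) ∨ s(x, y) = s(d, a) := by
    intro x y hxy
    by_cases h : M₂.Adj x y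
    · exact .inl h
    · have := hcov s(x, y) (by simp [symmDiff_def, hxy, h])
      exact .inr (by simpa using this)
  have alt₁ := adj_iff_not_adj_of_symmDiff h₁ h₂ hab hbc hac
  have alt₂ := adj_iff_not_adj_of_symmDiff h₁ h₂ hbc hcd hbd
  have alt₃ := adj_iff_not_adj_of_symmDiff h₁ h₂ hcd hda hac.symm
  by_cases h : M₂.Adj b c
  · have hda' : M₂.Adj d a := by tauto
    refine ⟨a, b, c, d, h, hda', fun x y hxy => ?_⟩
    have := hcov' x y hxy
    have := hxy.ne
    have := h.symm
    have := hda'.symm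
    simp only [sup_adj, edge_adj, Sym2.eq_iff] at *
    grind
  · have hcd' : M₂.Adj c d := by tauto
    have hab' : M₂.Adj a b := by tauto
    refine ⟨b, c, d, a, hcd', hab', fun x y hxy => ?_⟩
    have := hcov' x y hxy
    have := hxy.ne
    have := hcd'.symm
    have := hab'.symm
    simp only [sup_adj, edge_adj, Sym2.eq_iff] at *
    grind

theorem eq_or_eq_of_reachable_sup (h₁ : IsOneFactor M₁) (h₂ : IsOneFactor M₂) {u v x : V}
    (huv₁ : M₁.Adj u v) (huv₂ : M₂.Adj u v) (h : (M₁ ⊔ M₂).Reachable u x) : x = u ∨ x = v := by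
  have := h₁.matchOf_matchOf
  have := h₂.matchOf_matchOf
  rw [h₁.adj_iff] at huv₁
  rw [h₂.adj_iff] at huv₂
  rw [reachable_iff_reflTransGen] at h
  induction h with
  | refl => exact .inl rfl
  | tail _ hadj ih =>
    rw [sup_adj, h₁.adj_iff, h₂.adj_iff] at hadj
    grind

variable [Finite V]

theorem card_connectedComponent_sup_le_of_isCycleGraphOfLength_symmDiff
    (h₁ : IsOneFactor M₁) (h₂ : IsOneFactor M₂) (hc : IsCycleGraphOfLength (symmDiff M₁ M₂) 4)
    (M₃ : SimpleGraph V) :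
    Nat.card (M₂ ⊔ M₃).ConnectedComponent ≤ Nat.card (M₁ ⊔ M₃).ConnectedComponent + 1 := by
  obtain ⟨a, b, c, d, hbc, hda, hle⟩ := exists_le_sup_edge_sup_edge h₁ h₂ hc
  have hcb : (M₂ ⊔ M₃ ⊔ edge a b).Adj c b := Or.inl (Or.inl hbc.symm)
  have had : (M₂ ⊔ M₃ ⊔ edge a b).Adj a d := Or.inl (Or.inl hda.symm)
  have hcd := (hcb.reachable.trans (reachable_sup_edge _ _ _).symm).trans had.reachable
  calc Nat.card (M₂ ⊔ M₃).ConnectedComponent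
      ≤ Nat.card (M₂ ⊔ M₃ ⊔ edge a b).ConnectedComponent + 1 :=
        card_connectedComponent_le_card_sup_edge_add_one _ _ _
    _ ≤ Nat.card (M₁ ⊔ M₃).ConnectedComponent + 1 := by
        gcongr
        refine card_connectedComponent_le_of_forall_adj_reachable fun x y hxy => ?_
        rcases hxy with hxy | hxy
        · rcases hle hxy with (hxy | hxy) | hxy
          · exact Adj.reachable (Or.inl (Or.inl hxy))
          · exact Adj.reachable (Or.inr hxy)
          · exact reachable_of_edge_adj hcd hxy
        · exact Adj.reachable (Or.inl (Or.inr hxy))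

theorem card_connectedComponent_sup_lt_insertEdge_sup [DecidableEq V] {v₁ v₂ : V}
    (hM : IsOneFactor M) (hM₂ : IsOneFactor M₂) (hA : ¬ M.Adj v₁ v₂) (h₂ : M₂.Adj v₁ v₂) :
    Nat.card (M ⊔ M₂).ConnectedComponent <
      Nat.card (insertEdge M s(v₁, v₂) ⊔ M₂).ConnectedComponent := by
  have hne := h₂.ne
  set N := insertEdge M s(v₁, v₂)
  have hnr : ¬ (N ⊔ M₂).Reachable v₁ (matchOf M v₁) := fun h => by
    rcases (isOneFactor_insertEdge hM hA hne).eq_or_eq_of_reachable_sup hM₂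
      (insertEdge_adj hM hA hne) h₂ h with h | h
    · exact hM.matchOf_ne v₁ h
    · exact hA (h ▸ hM.adj_matchOf v₁)
  have h₃₁ : (M ⊔ M₂).Adj (matchOf M v₁) v₁ := Or.inl (hM.adj_matchOf v₁).symm
  have h₂₄ : (M ⊔ M₂).Adj v₂ (matchOf M v₂) := Or.inl (hM.adj_matchOf v₂)
  have h₃₄ := (h₃₁.reachable.trans (Adj.reachable (Or.inr h₂))).trans h₂₄.reachable
  calc Nat.card (M ⊔ M₂).ConnectedComponent
      ≤ Nat.card (N ⊔ M₂ ⊔ edge v₁ (matchOf M v₁)).ConnectedComponent := by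
        refine card_connectedComponent_le_of_forall_adj_reachable fun x y hxy => ?_
        rcases hxy with (hxy | hxy) | hxy
        · rcases insertEdge_le_sup hM hA hne hxy with (hxy | hxy) | hxy
          · exact Adj.reachable (Or.inl hxy)
          · exact reachable_of_edge_adj (Adj.reachable (Or.inr h₂)) hxy
          · exact reachable_of_edge_adj h₃₄ hxy
        · exact Adj.reachable (Or.inr hxy)
        · exact reachable_of_edge_adj h₃₁.reachable.symm hxy
    _ < Nat.card (N ⊔ M₂).ConnectedComponent := card_connectedComponent_sup_edge_lt hnr

end IsOneFactor

theorem IsPerfMatching.isOneFactor {n : ℕ} {M : SimpleGraph (Fin n)} (h : IsPerfMatching M) :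
    IsOneFactor M := h

namespace PMVertex

variable {m : ℕ}

theorem card_connectedComponent (X : PMVertex m) : Nat.card X.1.ConnectedComponent = m := by
  have := X.2.isOneFactor.two_mul_card_connectedComponent
  rw [Fintype.card_fin] at this
  omega

theorem card_connectedComponent_sup_le (X Y : PMVertex m) :
    Nat.card (X.1 ⊔ Y.1).ConnectedComponent ≤ m :=
  (ConnectedComponent.card_le_card_of_le le_sup_left).trans X.card_connectedComponent.le

theorem sub_card_connectedComponent_sup_le_length {X Y : PMVertex m}
    (p : (matchingGraph m).Walk X Y) :
    m - Nat.card (X.1 ⊔ Y.1).ConnectedComponent ≤ p.length := by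
  induction p with
  | nil => simp only [sup_idem, card_connectedComponent, Nat.sub_self, Nat.zero_le]
  | @cons X Z Y hXZ _ ih =>
    have := IsOneFactor.card_connectedComponent_sup_le_of_isCycleGraphOfLength_symmDiff
      X.2.isOneFactor Z.2.isOneFactor hXZ.2 Y.1
    rw [Walk.length_cons]
    omega

theorem exists_walk_length_le (X Y : PMVertex m) :
    ∃ p : (matchingGraph m).Walk X Y,
      p.length ≤ m - Nat.card (X.1 ⊔ Y.1).ConnectedComponent := by
  induction hk : m - Nat.card (X.1 ⊔ Y.1).ConnectedComponent using Nat.strong_induction_on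
    generalizing X with
  | _ k ih =>
  by_cases hXY : X = Y
  · subst hXY
    exact ⟨.nil, Nat.zero_le _⟩
  obtain ⟨v₁, v₂, hY, hX⟩ : ∃ v₁ v₂, Y.1.Adj v₁ v₂ ∧ ¬ X.1.Adj v₁ v₂ := by
    by_contra! h
    exact hXY (Subtype.ext (Y.2.isOneFactor.eq_of_le X.2.isOneFactor fun _ _ => h _ _).symm)
  let N : PMVertex m := ⟨_, isOneFactor_insertEdge X.2.isOneFactor hX hY.ne⟩
  have hXN : (matchingGraph m).Adj X N := matchAdj_insertEdge X.2.isOneFactor hX hY.ne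
  have hlt := X.2.isOneFactor.card_connectedComponent_sup_lt_insertEdge_sup Y.2.isOneFactor hX hY
  have hle : Nat.card (insertEdge X.1 s(v₁, v₂) ⊔ Y.1).ConnectedComponent ≤ m :=
    N.card_connectedComponent_sup_le Y
  obtain ⟨p, hp⟩ := ih (m - Nat.card (insertEdge X.1 s(v₁, v₂) ⊔ Y.1).ConnectedComponent)
    (by omega) N rfl
  exact ⟨.cons hXN p, by rw [Walk.length_cons]; omega⟩

theorem dist_eq (X Y : PMVertex m) :
    (matchingGraph m).dist X Y = m - Nat.card (X.1 ⊔ Y.1).ConnectedComponent := by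
  obtain ⟨p, hp⟩ := exists_walk_length_le X Y
  obtain ⟨q, hq⟩ := Reachable.exists_walk_length_eq_dist ⟨p⟩
  have := dist_le p
  have := sub_card_connectedComponent_sup_le_length q
  omega

end PMVertex

theorem stmt9_general (m : ℕ) (M' M'' : PMVertex m)
    (e : Sym2 (Fin (2 * m))) (he : e ∈ M''.1.edgeSet) (he' : e ∉ M'.1.edgeSet) :
    ∃ h : IsPerfMatching (insertEdge M'.1 e),
      (matchingGraph m).Adj M' ⟨insertEdge M'.1 e, h⟩ ∧
      (matchingGraph m).dist ⟨insertEdge M'.1 e, h⟩ M'' =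
        (matchingGraph m).dist M' M'' - 1 := by
  induction e using Sym2.inductionOn with | hf v₁ v₂ =>
  have hM' := M'.2.isOneFactor
  have hA : ¬ M'.1.Adj v₁ v₂ := he'
  have h₂ : M''.1.Adj v₁ v₂ := he
  have hN := isOneFactor_insertEdge hM' hA h₂.ne
  refine ⟨hN, matchAdj_insertEdge hM' hA h₂.ne, ?_⟩
  have hstep := hM'.card_connectedComponent_sup_le_of_isCycleGraphOfLength_symmDiff hN
    (isCycleGraphOfLength_symmDiff_insertEdge hM' hA h₂.ne) M''.1
  have hlt := hM'.card_connectedComponent_sup_lt_insertEdge_sup M''.2.isOneFactor hA h₂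
  rw [PMVertex.dist_eq, PMVertex.dist_eq]
  dsimp only
  omega

/-- If `M'` and `M''` are distinct perfect matchings of `K_{2m}` and `e` is an
edge of `M''` not in `M'`, then `M' * e` is adjacent to `M'` in `𝒫ₘ` and
`d(M' * e, M'') = d(M', M'') - 1`; i.e. there is a geodesic from `M'` to `M''`
starting with the insertion of `e`. -/
theorem stmt9 (m : ℕ) (M' M'' : PMVertex m) (hne : M' ≠ M'')
    (e : Sym2 (Fin (2 * m))) (he : e ∈ M''.1.edgeSet) (he' : e ∉ M'.1.edgeSet) :
    ∃ h : IsPerfMatching (insertEdge M'.1 e),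
      (matchingGraph m).Adj M' ⟨insertEdge M'.1 e, h⟩ ∧
      (matchingGraph m).dist ⟨insertEdge M'.1 e, h⟩ M'' =
        (matchingGraph m).dist M' M'' - 1 :=
  stmt9_general m M' M'' e he he'
end
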